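/- arXiv:1212.4210 — 4 statements merged into one kernel-verified Lean document; each statement's English description precedes it below -/
import Mathlib

section
/- Theorem 1 (CSP, noiseless individual recovery). Fix τ1 > 0 and τ2 ∈ (0,1). Then the P-probability of the set of matrices A ∈ ℝ^{d×n} for which every CSP estimate x̂ computed from the noiseless measurements y = A x_o satisfies ‖x̂ − x_o‖₂ ≤ δ·√((1+τ1)/(1−τ2)) is at least 1 − 2^r·exp((d/2)(τ2 + log(1−τ2))) − exp(−(d/2)(τ1 − log(1+τ1))). -/
open MeasureTheory ProbabilityTheory

/-- The Euclidean (`ℓ₂`) norm of a vector in `ℝ^m`. -/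
noncomputable def norm2 {m : ℕ} (x : Fin m → ℝ) : ℝ := Real.sqrt (∑ i, (x i) ^ 2)

/-- The action of a `d × n` matrix `A` on a vector `x ∈ ℝ^n`. -/
def mulVec' {d n : ℕ} (A : Fin d → Fin n → ℝ) (x : Fin n → ℝ) : Fin d → ℝ :=
  fun i => ∑ j, A i j * x j

/-- `xhat` is a CSP estimate for measurements `y` (w.r.t. codebook `C` and matrix `A`):
it belongs to `C` and minimizes `‖y - A c‖₂` over `c ∈ C`. -/
def IsCSPEstimate {d n : ℕ} (C : Finset (Fin n → ℝ)) (A : Fin d → Fin n → ℝ)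
    (y : Fin d → ℝ) (xhat : Fin n → ℝ) : Prop :=
  xhat ∈ C ∧ ∀ c ∈ C, norm2 (y - mulVec' A xhat) ≤ norm2 (y - mulVec' A c)

/-- The law of a `d × n` matrix with i.i.d. standard Gaussian `N(0,1)` entries. -/
noncomputable def gaussMatrix (d n : ℕ) : Measure (Fin d → Fin n → ℝ) :=
  Measure.pi fun _ => Measure.pi fun _ => gaussianReal 0 1

/-!
For a fixed `v`, the rows of `A` are independent standard Gaussian vectors, so the coordinates of
`A v` are i.i.d. `N(0, ‖v‖²)` and `‖A v‖² / ‖v‖²` is `χ²_d`, with moment generating function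
`(1 - 2t)^(-d/2)`. Chernoff's bound then gives
`P(‖A v‖² > (1 + τ₁) d ‖v‖²) ≤ exp (-(d/2) (τ₁ - log (1 + τ₁)))` and
`P(‖A v‖² < (1 - τ₂) d ‖v‖²) ≤ exp ((d/2) (τ₂ + log (1 - τ₂)))`.
Apply the first to `x_o - x̃` and the second, with a union bound, to `x_o - c` for the at most `2^r`
codewords `c`. Outside these events, since `x̂` minimizes `‖A (x_o - c)‖` over `C`,
`(1 - τ₂) d ‖x_o - x̂‖² ≤ ‖A (x_o - x̂)‖² ≤ ‖A (x_o - x̃)‖² ≤ (1 + τ₁) d δ²`.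
-/
open Real
open scoped ENNReal NNReal

theorem lintegral_exp_mul_sq_gaussianReal {v : ℝ≥0} {t : ℝ} (h : 2 * t * v < 1) :
    ∫⁻ x, ENNReal.ofReal (exp (t * x ^ 2)) ∂gaussianReal 0 v
      = ENNReal.ofReal ((1 - 2 * t * v) ^ (-(1 / 2 : ℝ))) := by
  rcases eq_or_ne v 0 with rfl | hv
  · simp [gaussianReal_zero_var]
  have hv' : (0 : ℝ) < v := by positivity
  set b : ℝ := (1 - 2 * t * v) / (2 * v) with hb
  have hb0 : 0 < b := div_pos (by linarith) (by positivity)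
  have hdens : ∀ x, gaussianPDFReal 0 v x * exp (t * x ^ 2)
      = (√(2 * π * v))⁻¹ * exp (-b * x ^ 2) := by
    intro x
    rw [gaussianPDFReal, mul_assoc, ← exp_add, hb]
    congr 2
    field_simp
    ring
  rw [gaussianReal_of_var_ne_zero 0 hv, lintegral_withDensity_eq_lintegral_mul _
    (measurable_gaussianPDF 0 v) (by fun_prop)]
  simp_rw [Pi.mul_apply, gaussianPDF, ← ENNReal.ofReal_mul (gaussianPDFReal_nonneg 0 v _), hdens]
  rw [← ofReal_integral_eq_lintegral_ofReal ((integrable_exp_neg_mul_sq hb0).const_mul _)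
    (Filter.Eventually.of_forall fun x => by positivity), integral_const_mul, integral_gaussian]
  congr 1
  rw [hb, rpow_neg (by linarith), ← sqrt_eq_rpow, ← sqrt_inv, ← sqrt_inv,
    ← sqrt_mul (by positivity)]
  congr 1
  field_simp

theorem map_dotProduct_pi_gaussianReal {ι : Type*} [Fintype ι] (v : ι → ℝ) :
    (Measure.pi fun _ : ι => gaussianReal 0 1).map (fun x => x ⬝ᵥ v)
      = gaussianReal 0 (∑ i, v i ^ 2).toNNReal := by
  set L : StrongDual ℝ (EuclideanSpace ℝ ι) := innerSL ℝ (WithLp.toLp 2 v)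
  have hL : (fun x : ι → ℝ => x ⬝ᵥ v) = L ∘ WithLp.toLp 2 := by
    ext x
    simp [L, dotProduct, PiLp.inner_apply, mul_comm]
  rw [hL, ← Measure.map_map L.continuous.measurable (by fun_prop), map_pi_eq_stdGaussian,
    IsGaussian.map_eq_gaussianReal, integral_strongDual_stdGaussian, variance_dual_stdGaussian,
    innerSL_apply_norm, EuclideanSpace.norm_sq_eq]
  simp

theorem norm2_sq {m : ℕ} (x : Fin m → ℝ) : norm2 x ^ 2 = ∑ i, x i ^ 2 :=
  sq_sqrt (by positivity)

theorem norm2_eq_norm {m : ℕ} (x : Fin m → ℝ) : norm2 x = ‖WithLp.toLp 2 x‖ := by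
  simp [norm2, EuclideanSpace.norm_eq]

theorem norm2_nonneg {m : ℕ} (x : Fin m → ℝ) : 0 ≤ norm2 x :=
  sqrt_nonneg _

theorem norm2_sub_comm {m : ℕ} (x y : Fin m → ℝ) : norm2 (x - y) = norm2 (y - x) := by
  simp only [norm2_eq_norm, WithLp.toLp_sub, norm_sub_rev]

theorem norm2_sq_eq_zero {m : ℕ} {x : Fin m → ℝ} : norm2 x ^ 2 = 0 ↔ x = 0 := by
  simp [norm2_eq_norm]

@[fun_prop]
theorem measurable_norm2 {m : ℕ} : Measurable (norm2 : (Fin m → ℝ) → ℝ) := by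
  unfold norm2
  fun_prop

@[fun_prop]
theorem measurable_mulVec' {d n : ℕ} (v : Fin n → ℝ) :
    Measurable fun A : Fin d → Fin n → ℝ => mulVec' A v := by
  unfold mulVec'
  fun_prop

theorem mulVec'_sub {d n : ℕ} (A : Fin d → Fin n → ℝ) (x y : Fin n → ℝ) :
    mulVec' A x - mulVec' A y = mulVec' A (x - y) := by
  ext i
  simp [mulVec', mul_sub]

theorem mulVec'_zero {d n : ℕ} (A : Fin d → Fin n → ℝ) : mulVec' A 0 = 0 := by
  ext i
  simp [mulVec']

instance isProbabilityMeasure_gaussMatrix (d n : ℕ) : IsProbabilityMeasure (gaussMatrix d n) := by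
  rw [gaussMatrix]
  infer_instance

theorem lintegral_exp_mul_norm2_mulVec'_sq_gaussMatrix (d n : ℕ) (v : Fin n → ℝ) {t : ℝ}
    (h : 2 * t * norm2 v ^ 2 < 1) :
    ∫⁻ A, ENNReal.ofReal (exp (t * norm2 (mulVec' A v) ^ 2)) ∂gaussMatrix d n
      = ENNReal.ofReal ((1 - 2 * t * norm2 v ^ 2) ^ (-((d : ℝ) / 2))) := by
  set g : (Fin n → ℝ) → ℝ≥0∞ := fun x => ENNReal.ofReal (exp (t * (x ⬝ᵥ v) ^ 2))
  have hg : Measurable g := by fun_prop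
  have hrows : ∀ A : Fin d → Fin n → ℝ,
      ENNReal.ofReal (exp (t * norm2 (mulVec' A v) ^ 2)) = ∏ i, g (A i) := by
    intro A
    rw [norm2_sq, Finset.mul_sum, exp_sum, ENNReal.ofReal_prod_of_nonneg fun _ _ => exp_nonneg _]
    rfl
  have hrow : ∫⁻ x, g x ∂(Measure.pi fun _ : Fin n => gaussianReal 0 1)
      = ENNReal.ofReal ((1 - 2 * t * norm2 v ^ 2) ^ (-(1 / 2 : ℝ))) := by
    have hvar : ((∑ j, v j ^ 2).toNNReal : ℝ) = norm2 v ^ 2 := by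
      rw [Real.coe_toNNReal _ (by positivity), norm2_sq]
    rw [← lintegral_map (f := fun y => ENNReal.ofReal (exp (t * y ^ 2))) (by fun_prop)
      (by fun_prop : Measurable fun x : Fin n → ℝ => x ⬝ᵥ v), map_dotProduct_pi_gaussianReal,
      lintegral_exp_mul_sq_gaussianReal (hvar ▸ h), hvar]
  simp_rw [hrows]
  rw [gaussMatrix, lintegral_prod_eq_prod_lintegral_of_indepFun _ _
    (iIndepFun_pi fun _ => hg.aemeasurable) fun i => hg.comp (measurable_pi_apply i)]
  rw [Finset.prod_congr rfl fun i _ => ((measurePreserving_eval _ i).lintegral_comp hg).trans hrow,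
    Finset.prod_const, Finset.card_univ, Fintype.card_fin]
  rw [← ENNReal.ofReal_pow (by positivity), ← rpow_natCast, ← rpow_mul (by linarith)]
  ring_nf

theorem measure_ge_le_exp_mul_lintegral_exp {Ω : Type*} [MeasurableSpace Ω] {μ : Measure Ω}
    {X : Ω → ℝ} (hX : AEMeasurable X μ) {t : ℝ} (ht : 0 ≤ t) (c : ℝ) :
    μ {ω | c ≤ X ω}
      ≤ ENNReal.ofReal (exp (-(t * c))) * ∫⁻ ω, ENNReal.ofReal (exp (t * X ω)) ∂μ := by
  calc μ {ω | c ≤ X ω}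
      ≤ μ {ω | ENNReal.ofReal (exp (t * c)) ≤ ENNReal.ofReal (exp (t * X ω))} :=
        measure_mono fun ω hω =>
          ENNReal.ofReal_le_ofReal (exp_le_exp.2 (mul_le_mul_of_nonneg_left hω ht))
    _ ≤ (∫⁻ ω, ENNReal.ofReal (exp (t * X ω)) ∂μ) / ENNReal.ofReal (exp (t * c)) :=
        meas_ge_le_lintegral_div (by fun_prop) (by positivity) ENNReal.ofReal_ne_top
    _ = _ := by
        rw [ENNReal.div_eq_inv_mul, ← ENNReal.ofReal_inv_of_pos (exp_pos _), exp_neg]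

theorem gaussMatrix_norm2_mulVec'_sq_upper_tail (d n : ℕ) (v : Fin n → ℝ) {τ : ℝ} (hτ : 0 < τ) :
    (gaussMatrix d n).real {A | (1 + τ) * d * norm2 v ^ 2 < norm2 (mulVec' A v) ^ 2}
      ≤ exp (-((d : ℝ) / 2) * (τ - log (1 + τ))) := by
  refine ENNReal.toReal_le_of_le_ofReal (exp_nonneg _) ?_
  rcases (sq_nonneg (norm2 v)).eq_or_lt with hS | hS
  · simp [norm2_sq_eq_zero.1 hS.symm, mulVec'_zero, norm2]
  set S := norm2 v ^ 2
  -- the minimiser over `t` of `exp (-t (1 + τ) d S) (1 - 2 t S) ^ (-d/2)`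
  set t := τ / (2 * (1 + τ) * S) with ht_def
  have ht : 0 < t := by positivity
  have hmgf : 1 - 2 * t * S = (1 + τ)⁻¹ := by rw [ht_def]; field_simp; ring
  calc gaussMatrix d n {A | (1 + τ) * d * S < norm2 (mulVec' A v) ^ 2}
    _ ≤ gaussMatrix d n {A | (1 + τ) * d * S ≤ norm2 (mulVec' A v) ^ 2} :=
        measure_mono (Set.ofPred_subset_ofPred.2 fun _ hA => hA.le)
    _ ≤ _ := measure_ge_le_exp_mul_lintegral_exp (by fun_prop) ht.le _
    _ = ENNReal.ofReal (exp (-((d : ℝ) / 2) * (τ - log (1 + τ)))) := by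
      rw [lintegral_exp_mul_norm2_mulVec'_sq_gaussMatrix d n v
          (by rw [← sub_pos, hmgf]; positivity),
        ← ENNReal.ofReal_mul (exp_nonneg _), hmgf, rpow_def_of_pos (by positivity), ← exp_add,
        log_inv]
      congr 2
      rw [ht_def]
      field_simp
      ring

theorem gaussMatrix_norm2_mulVec'_sq_lower_tail (d n : ℕ) (v : Fin n → ℝ) {τ : ℝ} (hτ₀ : 0 < τ)
    (hτ₁ : τ < 1) :
    (gaussMatrix d n).real {A | norm2 (mulVec' A v) ^ 2 < (1 - τ) * d * norm2 v ^ 2}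
      ≤ exp (((d : ℝ) / 2) * (τ + log (1 - τ))) := by
  refine ENNReal.toReal_le_of_le_ofReal (exp_nonneg _) ?_
  rcases (sq_nonneg (norm2 v)).eq_or_lt with hS | hS
  · simp [← hS, not_lt.2 (sq_nonneg _)]
  have hτ : 0 < 1 - τ := by linarith
  set S := norm2 v ^ 2
  set t := τ / (2 * (1 - τ) * S) with ht_def
  have ht : 0 < t := by positivity
  have hmgf : 1 - 2 * -t * S = (1 - τ)⁻¹ := by rw [ht_def]; field_simp; ring
  calc gaussMatrix d n {A | norm2 (mulVec' A v) ^ 2 < (1 - τ) * d * S}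
    _ ≤ gaussMatrix d n {A | -((1 - τ) * d * S) ≤ -norm2 (mulVec' A v) ^ 2} :=
        measure_mono (Set.ofPred_subset_ofPred.2 fun _ hA => neg_le_neg hA.le)
    _ ≤ _ := measure_ge_le_exp_mul_lintegral_exp (by fun_prop) ht.le _
    _ = ENNReal.ofReal (exp (((d : ℝ) / 2) * (τ + log (1 - τ)))) := by
      simp_rw [mul_neg, ← neg_mul]
      rw [lintegral_exp_mul_norm2_mulVec'_sq_gaussMatrix d n v
          (by rw [← sub_pos, hmgf]; positivity),
        ← ENNReal.ofReal_mul (exp_nonneg _), hmgf, rpow_def_of_pos (by positivity), ← exp_add,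
        log_inv]
      congr 2
      rw [ht_def]
      field_simp

theorem norm2_sub_le_of_isCSPEstimate {d n : ℕ} {C : Finset (Fin n → ℝ)} {A : Fin d → Fin n → ℝ}
    {x_o xtil xhat : Fin n → ℝ} {a b δ : ℝ} (hxtil : xtil ∈ C)
    (hxhat : IsCSPEstimate C A (mulVec' A x_o) xhat) (ha : 0 ≤ a) (hb : 0 < b)
    (hdist : norm2 (x_o - xtil) ≤ δ)
    (hupper : norm2 (mulVec' A (x_o - xtil)) ^ 2 ≤ a * norm2 (x_o - xtil) ^ 2)
    (hlower : b * norm2 (x_o - xhat) ^ 2 ≤ norm2 (mulVec' A (x_o - xhat)) ^ 2) :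
    norm2 (xhat - x_o) ≤ δ * √(a / b) := by
  have hmin : norm2 (mulVec' A (x_o - xhat)) ≤ norm2 (mulVec' A (x_o - xtil)) := by
    simpa only [mulVec'_sub] using hxhat.2 xtil hxtil
  have hchain : b * norm2 (x_o - xhat) ^ 2 ≤ a * δ ^ 2 :=
    calc b * norm2 (x_o - xhat) ^ 2
      _ ≤ norm2 (mulVec' A (x_o - xhat)) ^ 2 := hlower
      _ ≤ norm2 (mulVec' A (x_o - xtil)) ^ 2 := pow_le_pow_left₀ (norm2_nonneg _) hmin 2
      _ ≤ a * norm2 (x_o - xtil) ^ 2 := hupper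
      _ ≤ a * δ ^ 2 := by gcongr; exact norm2_nonneg _
  have hsq : norm2 (xhat - x_o) ^ 2 ≤ (δ * √(a / b)) ^ 2 := by
    rw [norm2_sub_comm, mul_pow, sq_sqrt (div_nonneg ha hb.le), mul_div_assoc', le_div_iff₀ hb]
    linarith
  exact (pow_le_pow_iff_left₀ (norm2_nonneg _)
    (mul_nonneg ((norm2_nonneg _).trans hdist) (sqrt_nonneg _)) two_ne_zero).1 hsq

theorem one_sub_measureReal_compl_le {Ω : Type*} [MeasurableSpace Ω] (μ : Measure Ω)
    [IsProbabilityMeasure μ] (s : Set Ω) : 1 - μ.real sᶜ ≤ μ.real s := by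
  have h := measureReal_union_le (μ := μ) s sᶜ
  rw [Set.union_compl_self, probReal_univ] at h
  linarith

theorem csp_noiseless_individual_general
    (n d r : ℕ) (hd : 1 ≤ d)
    (δ : ℝ) (x_o : Fin n → ℝ)
    (C : Finset (Fin n → ℝ)) (hCcard : C.card ≤ 2 ^ r)
    (xtil : Fin n → ℝ) (hxtil : xtil ∈ C) (hdist : norm2 (x_o - xtil) ≤ δ)
    (τ₁ τ₂ : ℝ) (hτ₁ : 0 < τ₁) (hτ₂ : τ₂ ∈ Set.Ioo (0 : ℝ) 1) :
    1 - 2 ^ r * Real.exp (((d : ℝ) / 2) * (τ₂ + Real.log (1 - τ₂)))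
        - Real.exp (-((d : ℝ) / 2) * (τ₁ - Real.log (1 + τ₁)))
      ≤ (gaussMatrix d n {A | ∀ xhat, IsCSPEstimate C A (mulVec' A x_o) xhat →
          norm2 (xhat - x_o) ≤ δ * Real.sqrt ((1 + τ₁) / (1 - τ₂))}).toReal := by
  obtain ⟨hτ₂0, hτ₂1⟩ := hτ₂
  have hd0 : (0 : ℝ) < d := by exact_mod_cast hd
  set good : Set (Fin d → Fin n → ℝ) := {A | ∀ xhat, IsCSPEstimate C A (mulVec' A x_o) xhat →
    norm2 (xhat - x_o) ≤ δ * √((1 + τ₁) / (1 - τ₂))}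
  set upper : Set (Fin d → Fin n → ℝ) :=
    {A | (1 + τ₁) * d * norm2 (x_o - xtil) ^ 2 < norm2 (mulVec' A (x_o - xtil)) ^ 2}
  set lower : (Fin n → ℝ) → Set (Fin d → Fin n → ℝ) :=
    fun c => {A | norm2 (mulVec' A (x_o - c)) ^ 2 < (1 - τ₂) * d * norm2 (x_o - c) ^ 2}
  have hbad : goodᶜ ⊆ upper ∪ ⋃ c ∈ C, lower c := by
    refine Set.compl_subset_comm.1 fun A hA xhat hxhat => ?_
    simp only [Set.mem_compl_iff, Set.mem_union, Set.mem_iUnion, not_or, not_exists] at hA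
    rw [← mul_div_mul_right _ _ hd0.ne']
    exact norm2_sub_le_of_isCSPEstimate hxtil hxhat (by positivity) (mul_pos (by linarith) hd0)
      hdist (not_lt.1 hA.1) (not_lt.1 (hA.2 xhat hxhat.1))
  have hcompl := (measureReal_mono hbad).trans <| (measureReal_union_le _ _).trans <|
    add_le_add (gaussMatrix_norm2_mulVec'_sq_upper_tail d n _ hτ₁) <|
      (measureReal_biUnion_finset_le C lower).trans <| Finset.sum_le_card_nsmul _ _ _
        fun c _ => gaussMatrix_norm2_mulVec'_sq_lower_tail d n _ hτ₂0 hτ₂1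
  have hcard : (C.card : ℝ) * exp (((d : ℝ) / 2) * (τ₂ + log (1 - τ₂)))
      ≤ 2 ^ r * exp (((d : ℝ) / 2) * (τ₂ + log (1 - τ₂))) := by
    gcongr
    exact_mod_cast hCcard
  rw [nsmul_eq_mul] at hcompl
  rw [← measureReal_def]
  linarith [one_sub_measureReal_compl_le (gaussMatrix d n) good]

/-- Theorem 1 (CSP, noiseless individual recovery). -/
theorem csp_noiseless_individual
    (n d r : ℕ) (hd : 1 ≤ d)
    (δ : ℝ) (hδ : 0 < δ) (x_o : Fin n → ℝ)
    (C : Finset (Fin n → ℝ)) (hCne : C.Nonempty) (hCcard : C.card ≤ 2 ^ r)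
    (xtil : Fin n → ℝ) (hxtil : xtil ∈ C) (hdist : norm2 (x_o - xtil) ≤ δ)
    (τ₁ τ₂ : ℝ) (hτ₁ : 0 < τ₁) (hτ₂ : τ₂ ∈ Set.Ioo (0 : ℝ) 1) :
    1 - 2 ^ r * Real.exp (((d : ℝ) / 2) * (τ₂ + Real.log (1 - τ₂)))
        - Real.exp (-((d : ℝ) / 2) * (τ₁ - Real.log (1 + τ₁)))
      ≤ (gaussMatrix d n {A | ∀ xhat, IsCSPEstimate C A (mulVec' A x_o) xhat →
          norm2 (xhat - x_o) ≤ δ * Real.sqrt ((1 + τ₁) / (1 - τ₂))}).toReal :=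
  csp_noiseless_individual_general n d r hd δ x_o C hCcard xtil hxtil hdist τ₁ τ₂ hτ₁ hτ₂
end

section
/- Lemma 1 (no dimension reduction for the full unit ball). Let n, d : ℕ with d < n. Then for every matrix A ∈ ℝ^{d×n} and every reconstruction map φ : ℝ^d → ℝ^n, there exists x ∈ ℝ^n with ‖x‖₂ ≤ 1 such that ‖φ(A x) − x‖₂ ≥ 1. In particular, the worst-case reconstruction error over the unit ball is at least 1 for any recovery scheme with fewer measurements than the ambient dimension. -/
/-!
A measurement map with fewer rows than columns kills some unit vector `z`. Then `z` and `-z`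
produce the same measurement, so any decoder returns the same point `p` for both; as
`‖p - z‖ + ‖p + z‖ ≥ ‖2 • z‖ = 2`, one of the two errors is at least `1`.
-/

lemma one_le_norm_sub_or_one_le_norm_add {E : Type*} [SeminormedAddCommGroup E]
    [NormedSpace ℝ E] {z : E} (hz : ‖z‖ = 1) (p : E) : 1 ≤ ‖p - z‖ ∨ 1 ≤ ‖p + z‖ := by
  by_contra! h
  have : ‖(2 : ℝ) • z‖ ≤ ‖p + z‖ + ‖p - z‖ := by
    calc ‖(2 : ℝ) • z‖ = ‖(p + z) - (p - z)‖ := by congr 1; module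
      _ ≤ _ := norm_sub_le _ _
  rw [norm_smul, hz] at this
  norm_num at this
  linarith [h.1, h.2]

theorem exists_norm_le_one_one_le_norm_sub_of_ker_ne_bot {E F : Type*} [NormedAddCommGroup E]
    [NormedSpace ℝ E] [AddCommGroup F] [Module ℝ F] {L : E →ₗ[ℝ] F} (hL : LinearMap.ker L ≠ ⊥)
    (φ : F → E) : ∃ x : E, ‖x‖ ≤ 1 ∧ 1 ≤ ‖φ (L x) - x‖ := by
  have : Nontrivial (LinearMap.ker L) := Submodule.nontrivial_iff_ne_bot.mpr hL
  obtain ⟨⟨z, hzL⟩, hz⟩ := exists_norm_eq (LinearMap.ker L) zero_le_one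
  replace hz : ‖z‖ = 1 := hz
  have hLz : L z = 0 := hzL
  rcases one_le_norm_sub_or_one_le_norm_add hz (φ 0) with h | h
  · exact ⟨z, hz.le, by rwa [hLz]⟩
  · exact ⟨-z, by rw [norm_neg, hz], by rwa [map_neg, hLz, neg_zero, sub_neg_eq_add]⟩

theorem Matrix.toEuclideanLin_ker_ne_bot_of_lt {d n : ℕ} (hdn : d < n)
    (A : Matrix (Fin d) (Fin n) ℝ) : LinearMap.ker (Matrix.toEuclideanLin A) ≠ ⊥ :=
  LinearMap.ker_ne_bot_of_finrank_lt (by simpa using hdn)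

/-- Lemma 1 (no dimension reduction for the full unit ball). -/
theorem no_dimension_reduction_unit_ball
    (n d : ℕ) (hdn : d < n)
    (A : Matrix (Fin d) (Fin n) ℝ)
    (φ : EuclideanSpace ℝ (Fin d) → EuclideanSpace ℝ (Fin n)) :
    ∃ x : EuclideanSpace ℝ (Fin n), ‖x‖ ≤ 1 ∧ 1 ≤ ‖φ (WithLp.toLp 2 (A.mulVec x)) - x‖ :=
  exists_norm_le_one_one_le_norm_sub_of_ker_ne_bot (A.toEuclideanLin_ker_ne_bot_of_lt hdn) φ
end

section
/- Proposition 2 (lower bound for strong CS-applicability). Let n, k, d : ℕ with k ≥ 1, n ≥ 2k and d ≤ 2k − 1. Then for every matrix A ∈ ℝ^{d×n} and every reconstruction map φ : ℝ^d → ℝ^n, there exists a k-sparse vector x ∈ ℝ^n with ‖x‖₂ ≤ 1 such that ‖φ(A x) − x‖₂ ≥ 1/2. Consequently, strong applicability of compressed sensing to the set Γ_k^n ∩ B₂^n(1) of k-sparse vectors in the unit ball requires at least 2k measurements. -/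
/-!
A linear map into a space of dimension less than `2k` kills a unit vector `g` supported on `2k`
coordinates. Splitting `g = u - v` with `u` and `v` supported on `k` of these coordinates each
gives two `k`-sparse vectors of the unit ball with the same measurements, so any decoder returns
the same point `z` for both, and `‖z - u‖ + ‖z - v‖ ≥ ‖u - v‖ = 1`.
-/

open Module Finset

theorem LinearMap.exists_ne_zero_map_eq_zero_of_finrank_lt_card {K ι F : Type*} [Field K]
    [AddCommGroup F] [Module K F] [FiniteDimensional K F]
    (f : (ι → K) →ₗ[K] F) (S : Finset ι) (hS : finrank K F < #S) :
    ∃ g, g ≠ 0 ∧ f g = 0 ∧ ∀ i ∉ S, g i = 0 := by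
  classical
  let e := Function.ExtendByZero.linearMap K ((↑) : S → ι)
  obtain ⟨y, hy, hy0⟩ := Submodule.exists_mem_ne_zero_of_ne_bot
    (LinearMap.ker_ne_bot_of_finrank_lt (f := f ∘ₗ e) (by simpa using hS))
  refine ⟨e y, (map_ne_zero_iff e (Function.extend_injective Subtype.val_injective _)).mpr hy0,
    hy, fun i hi => Function.extend_apply' _ _ _ fun ⟨j, hj⟩ => hi (hj ▸ j.2)⟩

theorem Set.ncard_setOf_ne_zero_le {ι M : Type*} [Zero M] {x : ι → M} (T : Finset ι)
    (hx : ∀ i ∉ T, x i = 0) : {i | x i ≠ 0}.ncard ≤ #T :=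
  (Set.ncard_le_ncard (t := T) (fun i (hi : x i ≠ 0) => by_contra fun hiT => hi (hx i hiT))
    T.finite_toSet).trans (Set.ncard_coe_finset T).le

theorem dist_le_dist_add_dist_of_map_eq {α β : Type*} [PseudoMetricSpace α]
    (f : α → β) (φ : β → α) {u v : α} (h : f u = f v) :
    dist u v ≤ dist (φ (f u)) u + dist (φ (f v)) v := by
  rw [h]
  exact dist_triangle_left u v _

namespace EuclideanSpace

variable {𝕜 ι : Type*} [RCLike 𝕜] [Fintype ι]

theorem norm_le_norm_of_forall_norm_le {x y : EuclideanSpace 𝕜 ι} (h : ∀ i, ‖x i‖ ≤ ‖y i‖) :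
    ‖x‖ ≤ ‖y‖ := by
  simp only [EuclideanSpace.norm_eq]
  gcongr with i
  exact h i

theorem exists_sub_eq_of_forall_notMem_eq_zero [DecidableEq ι] {g : EuclideanSpace 𝕜 ι}
    (S T : Finset ι) (hg : ∀ i ∉ S, g i = 0) :
    ∃ u v : EuclideanSpace 𝕜 ι, u - v = g ∧ ‖u‖ ≤ ‖g‖ ∧ ‖v‖ ≤ ‖g‖ ∧
      (∀ i ∉ T, u i = 0) ∧ ∀ i ∉ S \ T, v i = 0 := by
  set u : EuclideanSpace 𝕜 ι := WithLp.toLp 2 (T.piecewise g 0)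
  have hu : ∀ i, u i = if i ∈ T then g i else 0 := fun i => rfl
  refine ⟨u, u - g, sub_sub_cancel u g, norm_le_norm_of_forall_norm_le fun i => ?_,
    norm_le_norm_of_forall_norm_le fun i => ?_, fun i hi => ?_, fun i hi => ?_⟩
  · rw [hu]; split_ifs <;> simp
  · rw [PiLp.sub_apply, hu]; split_ifs <;> simp
  · rw [hu, if_neg hi]
  · rw [PiLp.sub_apply, hu]
    by_cases hiT : i ∈ T
    · simp [hiT]
    · simp [hiT, hg i (by simpa [hiT] using hi)]

theorem exists_norm_eq_one_map_eq_zero_of_finrank_lt_card {F : Type*} [AddCommGroup F]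
    [Module 𝕜 F] [FiniteDimensional 𝕜 F] (f : EuclideanSpace 𝕜 ι →ₗ[𝕜] F) (S : Finset ι)
    (hS : finrank 𝕜 F < #S) : ∃ g : EuclideanSpace 𝕜 ι, ‖g‖ = 1 ∧ f g = 0 ∧ ∀ i ∉ S, g i = 0 := by
  obtain ⟨g, hg0, hfg, hgS⟩ := (f ∘ₗ (WithLp.linearEquiv 2 𝕜 (ι → 𝕜)).symm.toLinearMap)
    |>.exists_ne_zero_map_eq_zero_of_finrank_lt_card S hS
  have hg : ‖WithLp.toLp 2 g‖ ≠ 0 := by simpa using hg0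
  refine ⟨((‖WithLp.toLp 2 g‖⁻¹ : ℝ) : 𝕜) • WithLp.toLp 2 g, ?_, ?_, fun i hi => ?_⟩
  · rw [norm_smul, RCLike.norm_ofReal, abs_inv, abs_norm, inv_mul_cancel₀ hg]
  · rw [map_smul, show f (WithLp.toLp 2 g) = 0 from hfg, smul_zero]
  · simp [hgS i hi]

end EuclideanSpace

theorem exists_sparse_norm_le_one_half_le_norm_decode_sub {𝕜 ι F : Type*} [RCLike 𝕜] [Fintype ι]
    [AddCommGroup F] [Module 𝕜 F] [FiniteDimensional 𝕜 F] {k : ℕ}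
    (hF : finrank 𝕜 F < 2 * k) (hι : 2 * k ≤ Fintype.card ι)
    (f : EuclideanSpace 𝕜 ι →ₗ[𝕜] F) (φ : F → EuclideanSpace 𝕜 ι) :
    ∃ x : EuclideanSpace 𝕜 ι, ‖x‖ ≤ 1 ∧ {i | x i ≠ 0}.ncard ≤ k ∧ 1 / 2 ≤ ‖φ (f x) - x‖ := by
  classical
  obtain ⟨S, -, hS⟩ := exists_subset_card_eq (s := univ) hι
  obtain ⟨T, hTS, hT⟩ := exists_subset_card_eq (s := S) (n := k) (by omega)
  have hST : #(S \ T) = k := by rw [card_sdiff_of_subset hTS]; omega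
  obtain ⟨g, hg, hfg, hgS⟩ :=
    EuclideanSpace.exists_norm_eq_one_map_eq_zero_of_finrank_lt_card f S (hS ▸ hF)
  obtain ⟨u, v, huv, hu, hv, huT, hvT⟩ :=
    EuclideanSpace.exists_sub_eq_of_forall_notMem_eq_zero S T hgS
  have hfuv : f u = f v := by rw [← sub_eq_zero, ← map_sub, huv, hfg]
  have herr := dist_le_dist_add_dist_of_map_eq f φ hfuv
  rw [dist_eq_norm, huv, hg, dist_eq_norm, dist_eq_norm] at herr
  by_cases hu_err : 1 / 2 ≤ ‖φ (f u) - u‖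
  · exact ⟨u, hg ▸ hu, (Set.ncard_setOf_ne_zero_le T huT).trans hT.le, hu_err⟩
  · exact ⟨v, hg ▸ hv, (Set.ncard_setOf_ne_zero_le _ hvT).trans hST.le, by linarith⟩

/-- Proposition 2 (lower bound for strong CS-applicability): with `d ≤ 2k − 1`
measurements, any reconstruction map fails on some `k`-sparse vector of the unit
ball with error at least `1/2`. -/
theorem strong_cs_applicability_lower_bound
    (n k d : ℕ) (hk : 1 ≤ k) (hn : 2 * k ≤ n) (hd : d ≤ 2 * k - 1)
    (A : Matrix (Fin d) (Fin n) ℝ)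
    (φ : EuclideanSpace ℝ (Fin d) → EuclideanSpace ℝ (Fin n)) :
    ∃ x : EuclideanSpace ℝ (Fin n),
      ‖x‖ ≤ 1 ∧ Set.ncard {i : Fin n | x i ≠ 0} ≤ k ∧
      (1 : ℝ) / 2 ≤ ‖φ (WithLp.toLp 2 (A.mulVec x)) - x‖ :=
  exists_sparse_norm_le_one_half_le_norm_decode_sub (by rw [finrank_euclideanSpace_fin]; omega)
    (by rwa [Fintype.card_fin]) (Matrix.toLpLin 2 2 A) φ
end

section
/- Example 2 (rate-distortion achievability for sparse vectors in the ball). Let n, k : ℕ with 1 ≤ k ≤ n, ρ > 0 and 0 < δ ≤ ρ·√k. Then there exists a finite set C ⊆ ℝ^n, each of whose elements is k-sparse, with the properties: (i) for every k-sparse x ∈ ℝ^n with ‖x‖₂ ≤ ρ there exists c ∈ C with ‖x − c‖₂ ≤ δ; and (ii) |C| ≤ binom(n,k)·(5·√k·ρ/δ)^k, i.e., log₂|C| ≤ log₂ binom(n,k) + k·log₂(√k·ρ/δ) + 3k. -/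
/-!
Fix a `k`-set `S` of coordinates containing the support and round every coordinate in `S` to the
nearest point of `εℤ`, `ε = δ / √k`: the error is at most `ε / 2` per coordinate, hence at most
`√k · ε / 2 ≤ δ` in norm. There are `binom(n, k)` choices of `S`, and a coordinate of absolute
value `≤ ρ` rounds to one of the `2⌈ρ / ε⌉ + 1 ≤ 5√k ρ / δ` points `jε` with `|j| ≤ ⌈ρ / ε⌉`.
-/

open Finset

theorem exists_finset_card_le_forall_abs_sub_le (ρ : ℝ) {ε : ℝ} (hε : 0 < ε) :
    ∃ G : Finset ℝ, G.card ≤ 2 * ⌈ρ / ε⌉₊ + 1 ∧ ∀ t, |t| ≤ ρ → ∃ g ∈ G, |t - g| ≤ ε / 2 := by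
  set M := ⌈ρ / ε⌉₊
  refine ⟨(Icc (-(M : ℤ)) M).image fun j : ℤ => j * ε, ?_, fun t ht => ?_⟩
  · calc _ ≤ (Icc (-(M : ℤ)) M).card := card_image_le
      _ = 2 * M + 1 := by rw [Int.card_Icc]; omega
  have hround : |t / ε - round (t / ε)| ≤ 1 / 2 := abs_sub_round _
  refine ⟨round (t / ε) * ε, mem_image_of_mem _ ?_, ?_⟩
  · have htM : |t / ε| ≤ M := by
      rw [abs_div, abs_of_pos hε]
      exact (div_le_div_of_nonneg_right ht hε.le).trans (Nat.le_ceil _)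
    have hr : |(round (t / ε) : ℝ)| < M + 1 := by
      linarith [abs_sub_abs_le_abs_sub (round (t / ε) : ℝ) (t / ε),
        abs_sub_comm (t / ε) (round (t / ε) : ℝ)]
    have hr' : |round (t / ε)| < (M : ℤ) + 1 := by exact_mod_cast hr
    rw [abs_lt] at hr'
    rw [mem_Icc]
    omega
  · have h : t - round (t / ε) * ε = (t / ε - round (t / ε)) * ε := by field_simp
    rw [h, abs_mul, abs_of_pos hε]
    linarith [mul_le_mul_of_nonneg_right hround hε.le]

section SparseGridCode

variable {ι : Type*} [Fintype ι] [DecidableEq ι]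

noncomputable def sparseGridCode (k : ℕ) (G : Finset ℝ) : Finset (EuclideanSpace ℝ ι) :=
  (powersetCard k univ).biUnion fun S =>
    (Fintype.piFinset fun i => if i ∈ S then G else {0}).image (WithLp.toLp 2)

variable {k : ℕ} {G : Finset ℝ}

theorem mem_sparseGridCode {c : EuclideanSpace ℝ ι} :
    c ∈ sparseGridCode k G ↔ ∃ S : Finset ι, S.card = k ∧ ∀ i, c i ∈ if i ∈ S then G else {0} := by
  simp only [sparseGridCode, mem_biUnion, mem_powersetCard_univ, mem_image, Fintype.mem_piFinset]
  constructor
  · rintro ⟨S, hS, a, ha, rfl⟩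
    exact ⟨S, hS, ha⟩
  · rintro ⟨S, hS, hc⟩
    exact ⟨S, hS, c.ofLp, hc, rfl⟩

theorem card_sparseGridCode_le (k : ℕ) (G : Finset ℝ) :
    (sparseGridCode (ι := ι) k G).card ≤ (Fintype.card ι).choose k * G.card ^ k := by
  calc _ ≤ ∑ S ∈ powersetCard k univ, (Fintype.piFinset fun i => if i ∈ S then G else {0}).card :=
        card_biUnion_le.trans (sum_le_sum fun S _ => card_image_le)
    _ = ∑ S ∈ powersetCard k (univ : Finset ι), G.card ^ k := by
        refine sum_congr rfl fun S hS => ?_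
        rw [mem_powersetCard_univ] at hS
        simp [Fintype.card_piFinset, apply_ite Finset.card, prod_ite_mem, hS]
    _ = _ := by simp [card_powersetCard]

theorem ncard_support_le_of_mem_sparseGridCode {c : EuclideanSpace ℝ ι}
    (hc : c ∈ sparseGridCode k G) : {i | c i ≠ 0}.ncard ≤ k := by
  obtain ⟨S, rfl, hcS⟩ := mem_sparseGridCode.1 hc
  have hsupp : {i | c i ≠ 0} ⊆ S := fun i hi =>
    by_contra fun hiS => hi (by simpa [mem_coe.not.1 hiS] using hcS i)
  exact (Set.ncard_le_ncard hsupp S.finite_toSet).trans (Set.ncard_coe_finset S).le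

theorem exists_mem_sparseGridCode_norm_sub_le (hk : k ≤ Fintype.card ι) {η : ℝ} (hη : 0 ≤ η)
    {x : EuclideanSpace ℝ ι} (hx : {i | x i ≠ 0}.ncard ≤ k)
    (hG : ∀ i, ∃ g ∈ G, |x i - g| ≤ η) :
    ∃ c ∈ sparseGridCode k G, ‖x - c‖ ≤ √k * η := by
  choose g hgG hg using hG
  obtain ⟨S, hxS, rfl⟩ := exists_superset_card_eq (s := {i | x i ≠ 0}.toFinset)
    (by rwa [← Set.ncard_eq_toFinset_card']) hk
  set c : EuclideanSpace ℝ ι := WithLp.toLp 2 fun i => if i ∈ S then g i else 0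
  have hc : c ∈ sparseGridCode S.card G :=
    mem_sparseGridCode.2 ⟨S, rfl, fun i => by by_cases hi : i ∈ S <;> simp [c, hi, hgG]⟩
  have hcoord : ∀ i, (x - c) i ^ 2 ≤ if i ∈ S then η ^ 2 else 0 := fun i => by
    by_cases hi : i ∈ S
    · simpa [c, hi, sq_abs] using pow_le_pow_left₀ (abs_nonneg _) (hg i) 2
    · have hxi : x i = 0 := by_contra fun h => hi (hxS (by simpa using h))
      simp [c, hi, hxi]
  have hsq : ‖x - c‖ ^ 2 ≤ (√S.card * η) ^ 2 := by
    rw [EuclideanSpace.real_norm_sq_eq, mul_pow, Real.sq_sqrt (Nat.cast_nonneg _)]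
    calc ∑ i, (x - c) i ^ 2 ≤ ∑ i, if i ∈ S then η ^ 2 else 0 := sum_le_sum fun i _ => hcoord i
      _ = S.card * η ^ 2 := by simp [sum_ite_mem]
  exact ⟨c, hc, le_of_pow_le_pow_left₀ two_ne_zero (by positivity) hsq⟩

end SparseGridCode

theorem exists_sparse_covering_code (ι : Type*) [Fintype ι] {k : ℕ} (hk : k ≤ Fintype.card ι)
    {ρ ε : ℝ} (hε : 0 < ε) (hερ : ε ≤ ρ) :
    ∃ C : Finset (EuclideanSpace ℝ ι),
      (∀ c ∈ C, {i | c i ≠ 0}.ncard ≤ k) ∧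
      (∀ x : EuclideanSpace ℝ ι, ‖x‖ ≤ ρ → {i | x i ≠ 0}.ncard ≤ k →
        ∃ c ∈ C, ‖x - c‖ ≤ √k * (ε / 2)) ∧
      (C.card : ℝ) ≤ (Fintype.card ι).choose k * (5 * (ρ / ε)) ^ k := by
  classical
  obtain ⟨G, hGcard, hGnet⟩ := exists_finset_card_le_forall_abs_sub_le ρ hε
  refine ⟨sparseGridCode k G, fun c => ncard_support_le_of_mem_sparseGridCode,
    fun x hx hxs => exists_mem_sparseGridCode_norm_sub_le hk (by positivity) hxs
      fun i => hGnet (x i) ((PiLp.norm_apply_le x i).trans hx), ?_⟩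
  have hG : (G.card : ℝ) ≤ 5 * (ρ / ε) := by
    have hρε : 1 ≤ ρ / ε := (one_le_div hε).2 hερ
    calc (G.card : ℝ) ≤ 2 * ⌈ρ / ε⌉₊ + 1 := by exact_mod_cast hGcard
      _ ≤ 5 * (ρ / ε) := by linarith [Nat.ceil_lt_add_one (zero_le_one.trans hρε)]
  calc ((sparseGridCode k G).card : ℝ) ≤ ((Fintype.card ι).choose k * G.card ^ k : ℕ) := by
        exact_mod_cast card_sparseGridCode_le k G
    _ ≤ _ := by push_cast; gcongr

theorem logb_two_mul_pow_five_mul_le {A t : ℝ} (hA : 0 < A) (ht : 0 < t) (k : ℕ) :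
    Real.logb 2 (A * (5 * t) ^ k) ≤ Real.logb 2 A + k * Real.logb 2 t + 3 * k := by
  have h5 : Real.logb 2 5 ≤ 3 := (Real.logb_le_iff_le_rpow one_lt_two (by norm_num)).2 (by norm_num)
  rw [Real.logb_mul hA.ne' (by positivity), Real.logb_pow, Real.logb_mul (by norm_num) ht.ne']
  linarith [mul_le_mul_of_nonneg_left h5 (Nat.cast_nonneg (α := ℝ) k)]

/-- Example 2 (rate-distortion achievability for `k`-sparse vectors in the ball). -/
theorem sparse_ball_compression_code
    (n k : ℕ) (hk : 1 ≤ k) (hkn : k ≤ n) (ρ δ : ℝ) (hρ : 0 < ρ) (hδ : 0 < δ)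
    (hδρ : δ ≤ ρ * Real.sqrt k) :
    ∃ C : Finset (EuclideanSpace ℝ (Fin n)),
      (∀ c ∈ C, Set.ncard {i : Fin n | c i ≠ 0} ≤ k) ∧
      (∀ x : EuclideanSpace ℝ (Fin n), ‖x‖ ≤ ρ →
        Set.ncard {i : Fin n | x i ≠ 0} ≤ k → ∃ c ∈ C, ‖x - c‖ ≤ δ) ∧
      (C.card : ℝ) ≤ (n.choose k : ℝ) * (5 * Real.sqrt k * ρ / δ) ^ k ∧
      Real.logb 2 (C.card : ℝ)
        ≤ Real.logb 2 (n.choose k : ℝ)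
          + (k : ℝ) * Real.logb 2 (Real.sqrt k * ρ / δ) + 3 * (k : ℝ) := by
  have hsk : 0 < √(k : ℝ) := Real.sqrt_pos.2 (by exact_mod_cast hk)
  have hερ : δ / √k ≤ ρ := by rw [div_le_iff₀ hsk]; linarith
  obtain ⟨C, hsparse, hcover, hcard⟩ :=
    exists_sparse_covering_code (Fin n) (by simpa using hkn) (div_pos hδ hsk) hερ
  have hscale : ρ / (δ / √k) = √k * ρ / δ := by field_simp
  have hcard' : (C.card : ℝ) ≤ n.choose k * (5 * (√k * ρ / δ)) ^ k := by
    simpa [hscale] using hcard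
  have hcover' : ∀ x : EuclideanSpace ℝ (Fin n), ‖x‖ ≤ ρ →
      {i | x i ≠ 0}.ncard ≤ k → ∃ c ∈ C, ‖x - c‖ ≤ δ := fun x hx hxs =>
    let ⟨c, hc, hxc⟩ := hcover x hx hxs
    ⟨c, hc, hxc.trans (by field_simp; linarith)⟩
  have hC : (0 : ℝ) < C.card := by
    obtain ⟨c, hc, -⟩ := hcover' 0 (by simpa using hρ.le) (by simp)
    exact_mod_cast card_pos.2 ⟨c, hc⟩
  refine ⟨C, hsparse, hcover', by rwa [mul_assoc, mul_div_assoc], ?_⟩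
  calc Real.logb 2 C.card ≤ Real.logb 2 (n.choose k * (5 * (√k * ρ / δ)) ^ k) :=
        Real.logb_le_logb_of_le one_lt_two hC hcard'
    _ ≤ _ := logb_two_mul_pow_five_mul_le (by exact_mod_cast Nat.choose_pos hkn) (by positivity) k
end
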